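/- Classical–quantum Fisher information inequality (finite outcomes, pure-state version): let σ be a density matrix, L self-adjoint with σL + Lσ = 2σ̇, and {M_x} a finite POVM (M_x ⪰ 0, ∑_x M_x = I). Then ∑_x (Re Tr[σ L M_x])² / Tr[σ M_x] ≤ Tr[σ L²], where the sum ranges over x with Tr[σ M_x] > 0. -/

import Mathlib

open Matrix
open scoped ComplexOrder

/-!
Weight the Hilbert–Schmidt inner product by `σ`, `⟪A, B⟫ = Tr (B σ Aᴴ)`, and factor each effect
as `M_x = C_xᴴ C_x`. Then `Tr (σ L M_x) = ⟪C_x L, C_x⟫`, `Tr (σ L M_x L) = ⟪C_x L, C_x L⟫` and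
`Tr (σ M_x) = ⟪C_x, C_x⟫`, so Cauchy–Schwarz bounds the `x`-th term of the sum by the nonnegative
number `Re Tr (σ L M_x L)`, and these sum to `Re Tr (σ L²)` because `∑ M_x = 1`.
-/

namespace Matrix

variable {n 𝕜 : Type*} [Fintype n] [RCLike 𝕜]

theorem PosSemidef.sq_re_trace_mul_mul_conjTranspose_le {P : Matrix n n 𝕜} (hP : P.PosSemidef)
    (A B : Matrix n n 𝕜) :
    RCLike.re (B * P * Aᴴ).trace ^ 2 ≤
      RCLike.re (A * P * Aᴴ).trace * RCLike.re (B * P * Bᴴ).trace := by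
  let := P.toMatrixSeminormedAddCommGroup hP
  let := P.toMatrixInnerProductSpace hP
  have cauchySchwarz := inner_mul_inner_self_le (𝕜 := 𝕜) A B
  rw [norm_inner_symm B A, ← sq] at cauchySchwarz
  exact (sq_le_sq' (abs_le.mp (RCLike.abs_re_le_norm _)).1 (RCLike.re_le_norm _)).trans
    cauchySchwarz

theorem PosSemidef.exists_eq_conjTranspose_mul_self {Q : Matrix n n 𝕜} (hQ : Q.PosSemidef) :
    ∃ C : Matrix n n 𝕜, Q = Cᴴ * C := by
  classical
  open scoped MatrixOrder in
  exact CStarAlgebra.nonneg_iff_eq_star_mul_self.mp hQ.nonneg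

theorem trace_mul_mul_conjTranspose_mul_self_mul_conjTranspose (P A C : Matrix n n 𝕜) :
    (P * A * (Cᴴ * C) * Aᴴ).trace = (C * Aᴴ * P * (C * Aᴴ)ᴴ).trace := by
  simp only [conjTranspose_mul, conjTranspose_conjTranspose, mul_assoc]
  rw [trace_mul_comm C]
  simp only [mul_assoc]
  rw [trace_mul_comm Aᴴ]
  simp only [mul_assoc]

variable {P Q : Matrix n n 𝕜}

theorem PosSemidef.sq_re_trace_mul_mul_le_mul (hP : P.PosSemidef) (hQ : Q.PosSemidef)
    (A : Matrix n n 𝕜) :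
    RCLike.re (P * A * Q).trace ^ 2 ≤
      RCLike.re (P * A * Q * Aᴴ).trace * RCLike.re (P * Q).trace := by
  obtain ⟨C, rfl⟩ := hQ.exists_eq_conjTranspose_mul_self
  have hPAQ : (P * A * (Cᴴ * C)).trace = (C * P * (C * Aᴴ)ᴴ).trace := by
    simp only [conjTranspose_mul, conjTranspose_conjTranspose, mul_assoc]
    rw [trace_mul_comm C]
    simp only [mul_assoc]
  have hPQ : (P * (Cᴴ * C)).trace = (C * P * Cᴴ).trace := by
    rw [mul_assoc, trace_mul_comm C, mul_assoc]
  rw [hPAQ, hPQ, trace_mul_mul_conjTranspose_mul_self_mul_conjTranspose]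
  exact hP.sq_re_trace_mul_mul_conjTranspose_le (C * Aᴴ) C

theorem PosSemidef.re_trace_mul_mul_mul_conjTranspose_nonneg (hP : P.PosSemidef)
    (hQ : Q.PosSemidef) (A : Matrix n n 𝕜) :
    0 ≤ RCLike.re (P * A * Q * Aᴴ).trace := by
  obtain ⟨C, rfl⟩ := hQ.exists_eq_conjTranspose_mul_self
  rw [trace_mul_mul_conjTranspose_mul_self_mul_conjTranspose]
  exact (RCLike.nonneg_iff.mp (hP.mul_mul_conjTranspose_same (C * Aᴴ)).trace_nonneg).1

end Matrix

open Classical in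
theorem stmt_16_general {d : ℕ} {X : Type*} [Fintype X]
    (σ : Matrix (Fin d) (Fin d) ℂ) (hσ : σ.PosSemidef)
    (L : Matrix (Fin d) (Fin d) ℂ) (hL : L.IsHermitian)
    (M : X → Matrix (Fin d) (Fin d) ℂ)
    (hMpos : ∀ x, (M x).PosSemidef)
    (hMsum : ∑ x, M x = (1 : Matrix (Fin d) (Fin d) ℂ)) :
    ∑ x ∈ Finset.univ.filter (fun x => 0 < ((σ * M x).trace).re),
        ((σ * L * M x).trace.re) ^ 2 / ((σ * M x).trace).re ≤
      ((σ * L * L).trace).re := by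
  calc ∑ x ∈ Finset.univ.filter (fun x => 0 < ((σ * M x).trace).re),
        ((σ * L * M x).trace.re) ^ 2 / ((σ * M x).trace).re
      ≤ ∑ x ∈ Finset.univ.filter (fun x => 0 < ((σ * M x).trace).re),
          (σ * L * M x * Lᴴ).trace.re :=
        Finset.sum_le_sum fun x hx => (div_le_iff₀ (Finset.mem_filter.mp hx).2).mpr
          (hσ.sq_re_trace_mul_mul_le_mul (hMpos x) L)
    _ ≤ ∑ x, (σ * L * M x * Lᴴ).trace.re :=
        Finset.sum_le_sum_of_subset_of_nonneg (Finset.filter_subset _ _) fun x _ _ =>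
          hσ.re_trace_mul_mul_mul_conjTranspose_nonneg (hMpos x) L
    _ = (σ * L * L).trace.re := by
        rw [← Complex.re_sum, ← trace_sum, ← Finset.sum_mul, ← Finset.mul_sum, hMsum, mul_one,
          hL.eq]

open Classical in
/-- Classical–quantum Fisher information inequality:
for a density matrix `σ`, a Hermitian `L`, and a finite POVM `{M_x}`,
`∑_x (Re Tr[σ L M_x])² / Tr[σ M_x] ≤ Tr[σ L²]`, the sum ranging over the
outcomes with `Tr[σ M_x] > 0`. -/
theorem stmt_16 {d : ℕ} {X : Type*} [Fintype X]
    (σ : Matrix (Fin d) (Fin d) ℂ) (hσ : σ.PosSemidef) (hσ1 : σ.trace = 1)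
    (L : Matrix (Fin d) (Fin d) ℂ) (hL : L.IsHermitian)
    (M : X → Matrix (Fin d) (Fin d) ℂ)
    (hMpos : ∀ x, (M x).PosSemidef)
    (hMsum : ∑ x, M x = (1 : Matrix (Fin d) (Fin d) ℂ)) :
    ∑ x ∈ Finset.univ.filter (fun x => 0 < ((σ * M x).trace).re),
        ((σ * L * M x).trace.re) ^ 2 / ((σ * M x).trace).re ≤
      ((σ * L * L).trace).re :=
  stmt_16_general σ hσ L hL M hMpos hMsum
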